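/- Let T ≥ 2 be an integer, i₀ > 0 a real number, and i : ℝ → ℝ a function that is nonnegative and differentiable on [0,∞). Let x* be a minimizer of C over the feasible set and let 1 ≤ k ≤ T−1. If x*_k = 0, then the first-order (KKT) condition at the boundary holds: ∑_{t=k}^{T-1} i'(0)/D_t(x*)² ≤ 1. -/

import Mathlib

/-- Partial information `D_t(x) = i₀ + ∑_{s=1}^{t} i(x_s)`. -/
noncomputable def Dinfo (i0 : ℝ) (i : ℝ → ℝ) (x : ℕ → ℝ) (t : ℕ) : ℝ :=
  i0 + ∑ s ∈ Finset.Icc 1 t, i (x s)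

/-- Cost `C(x) = ∑_{t=1}^{T-1} 1/D_t(x) + ∑_{t=1}^{T-1} x_t`. -/
noncomputable def cost (T : ℕ) (i0 : ℝ) (i : ℝ → ℝ) (x : ℕ → ℝ) : ℝ :=
  (∑ t ∈ Finset.Icc 1 (T - 1), 1 / Dinfo i0 i x t) + ∑ t ∈ Finset.Icc 1 (T - 1), x t

/-- Feasibility: `x_k ≥ 0` for `k = 1, …, T-1`. -/
def Feasible (T : ℕ) (x : ℕ → ℝ) : Prop :=
  ∀ k, 1 ≤ k → k ≤ T - 1 → 0 ≤ x k


/-! Moving only the coordinate `x_k` of the minimizer along the ray `x_k ≥ 0` gives a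
one-variable function with a boundary minimum at `x_k = 0`, so its right derivative there
is nonnegative. Changing `x_k` shifts every `D_t` with `t ≥ k` by `i(x_k)` and leaves the
others alone, so that right derivative is `1 - ∑_{t ≥ k} i'(0) / D_t²`. -/

open Finset Function

theorem IsLocalMinOn.hasDerivWithinAt_Ici_nonneg {f : ℝ → ℝ} {a f' : ℝ}
    (h : IsLocalMinOn f (Set.Ici a) a) (hf : HasDerivWithinAt f f' (Set.Ici a) a) : 0 ≤ f' := by
  have hone : (1 : ℝ) ∈ posTangentConeAt (Set.Ici a) a :=
    mem_posTangentConeAt_of_segment_subset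
      ((segment_eq_Icc (by simp)).trans_subset Set.Icc_subset_Ici_self)
  simpa using h.hasFDerivWithinAt_nonneg hf.hasFDerivWithinAt hone

theorem HasDerivWithinAt.comp_update_apply {α : Type*} [DecidableEq α] {f : ℝ → ℝ}
    {d ε : ℝ} {s : Set ℝ} (hf : HasDerivWithinAt f d s ε) (x : α → ℝ) (k j : α) :
    HasDerivWithinAt (fun e => f (update x k e j)) (if j = k then d else 0) s ε := by
  by_cases hjk : j = k
  · subst hjk
    simpa using hf
  · simpa [update_of_ne hjk, hjk] using hasDerivWithinAt_const ε s (f (x j))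

theorem Feasible.update {T : ℕ} {x : ℕ → ℝ} (hx : Feasible T x) (k : ℕ) {ε : ℝ}
    (hε : 0 ≤ ε) : Feasible T (update x k ε) := by
  intro j hj1 hj2
  by_cases hjk : j = k
  · simpa [hjk] using hε
  · simpa [update_of_ne hjk] using hx j hj1 hj2

theorem Feasible.Dinfo_pos {T : ℕ} {x : ℕ → ℝ} (hx : Feasible T x) {i0 : ℝ} (hi0 : 0 < i0)
    {i : ℝ → ℝ} (hi : ∀ y, 0 ≤ y → 0 ≤ i y) {t : ℕ} (ht : t ≤ T - 1) :
    0 < Dinfo i0 i x t := by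
  have hsum : 0 ≤ ∑ s ∈ Icc 1 t, i (x s) := sum_nonneg fun s hs => by
    rw [mem_Icc] at hs
    exact hi _ (hx s hs.1 (hs.2.trans ht))
  unfold Dinfo
  linarith

theorem hasDerivWithinAt_Dinfo_update {i0 : ℝ} {i : ℝ → ℝ} {d ε : ℝ} {s : Set ℝ}
    (hi : HasDerivWithinAt i d s ε) (x : ℕ → ℝ) (k t : ℕ) :
    HasDerivWithinAt (fun e => Dinfo i0 i (update x k e) t)
      (if k ∈ Icc 1 t then d else 0) s ε := by
  rw [← sum_ite_eq' (Icc 1 t) k (fun _ => d)]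
  exact (HasDerivWithinAt.fun_sum fun j _ => hi.comp_update_apply x k j).const_add i0

theorem hasDerivWithinAt_cost_update {T : ℕ} {i0 : ℝ} {i : ℝ → ℝ} {d : ℝ} {s : Set ℝ}
    {x : ℕ → ℝ} {k : ℕ} (hk1 : 1 ≤ k) (hk2 : k ≤ T - 1) (hi : HasDerivWithinAt i d s (x k))
    (hD : ∀ t ∈ Icc 1 (T - 1), Dinfo i0 i x t ≠ 0) :
    HasDerivWithinAt (fun e => cost T i0 i (update x k e))
      (1 - ∑ t ∈ Icc k (T - 1), d / Dinfo i0 i x t ^ 2) s (x k) := by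
  have hrecip := HasDerivWithinAt.fun_sum fun t ht =>
    ((hasDerivWithinAt_Dinfo_update (i0 := i0) hi x k t).inv (by simpa using hD t ht))
  have hlin := HasDerivWithinAt.fun_sum fun j (_ : j ∈ Icc 1 (T - 1)) =>
    (hasDerivWithinAt_id (x k) s).comp_update_apply x k j
  have hcost : (fun e => cost T i0 i (update x k e)) = fun e =>
      ∑ t ∈ Icc 1 (T - 1), (Dinfo i0 i (update x k e) t)⁻¹ +
        ∑ j ∈ Icc 1 (T - 1), update x k e j := by
    funext e
    simp only [cost, one_div]
  rw [hcost]
  refine (hrecip.add hlin).congr_deriv ?_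
  rw [sum_ite_eq' _ k (fun _ => (1 : ℝ)), if_pos (mem_Icc.2 ⟨hk1, hk2⟩), update_eq_self,
    sub_eq_neg_add, ← sum_neg_distrib]
  have hIcc : Icc k (T - 1) = (Icc 1 (T - 1)).filter (fun t => k ∈ Icc 1 t) := by
    ext t
    simp only [mem_Icc, mem_filter]
    omega
  rw [hIcc, sum_filter]
  congr 1
  refine sum_congr rfl fun t _ => ?_
  split_ifs <;> ring

theorem kkt_boundary_condition_general (T : ℕ) (i0 : ℝ) (hi0 : 0 < i0) (i : ℝ → ℝ)
    (hnonneg : ∀ y, 0 ≤ y → 0 ≤ i y)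
    (hdiff : DifferentiableOn ℝ i (Set.Ici 0))
    (xs : ℕ → ℝ) (hfeas : Feasible T xs)
    (hmin : ∀ x, Feasible T x → cost T i0 i xs ≤ cost T i0 i x)
    (k : ℕ) (hk1 : 1 ≤ k) (hk2 : k ≤ T - 1) (hzero : xs k = 0) :
    ∑ t ∈ Finset.Icc k (T - 1),
      derivWithin i (Set.Ici 0) 0 / (Dinfo i0 i xs t) ^ 2 ≤ 1 := by
  have hi : HasDerivWithinAt i (derivWithin i (Set.Ici 0) 0) (Set.Ici (xs k)) (xs k) := by
    rw [hzero]
    exact (hdiff 0 Set.self_mem_Ici).hasDerivWithinAt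
  have hD : ∀ t ∈ Icc 1 (T - 1), Dinfo i0 i xs t ≠ 0 := fun t ht =>
    (hfeas.Dinfo_pos hi0 hnonneg (mem_Icc.1 ht).2).ne'
  have hline : IsMinOn (fun e => cost T i0 i (update xs k e)) (Set.Ici (xs k)) (xs k) := by
    intro e he
    rw [Set.mem_Ici, hzero] at he
    simpa using hmin _ (hfeas.update k he)
  have hslope := hline.localize.hasDerivWithinAt_Ici_nonneg
    (hasDerivWithinAt_cost_update hk1 hk2 hi hD)
  linarith

theorem kkt_boundary_condition (T : ℕ) (hT : 2 ≤ T) (i0 : ℝ) (hi0 : 0 < i0) (i : ℝ → ℝ)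
    (hnonneg : ∀ y, 0 ≤ y → 0 ≤ i y)
    (hdiff : DifferentiableOn ℝ i (Set.Ici 0))
    (xs : ℕ → ℝ) (hfeas : Feasible T xs)
    (hmin : ∀ x, Feasible T x → cost T i0 i xs ≤ cost T i0 i x)
    (k : ℕ) (hk1 : 1 ≤ k) (hk2 : k ≤ T - 1) (hzero : xs k = 0) :
    ∑ t ∈ Finset.Icc k (T - 1),
      derivWithin i (Set.Ici 0) 0 / (Dinfo i0 i xs t) ^ 2 ≤ 1 :=
  kkt_boundary_condition_general T i0 hi0 i hnonneg hdiff xs hfeas hmin k hk1 hk2 hzero
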